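/- Let K be a field with char K ≠ 2, n ≥ 2 and 1 ≤ i ≤ n/2. Write the standard basis of K^{2n} as e_1,…,e_n,f_1,…,f_n, so that ω(e_j,f_k) = δ_{jk} and ω(e_j,e_k) = ω(f_j,f_k) = 0. Let θ be the linear map acting as −1 on e_1,…,e_i,f_1,…,f_i and as +1 on the remaining basis vectors (the (I_{2n−2i}, −I_{2i})-homology). Then θ preserves ω, and the collineation it induces on C_{n,1}(K) has opposition diagram C_{n;i}^2; explicitly: (a) ω(x, θx) = 0 for all x ∈ K^{2n} (θ is point-domestic); (b) every totally isotropic subspace of dimension > 2i contains a nonzero θ-fixed vector, hence is not mapped to an opposite; (c) the subspace V = span{e_j + f_{n−j+1}, e_{n−j+1} + f_j : 1 ≤ j ≤ i} is totally isotropic of dimension 2i and V ∩ (θV)^⊥ = 0, i.e. θ maps V to an opposite. -/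

import Mathlib

/-!
The homology `θ` scales `e_j` and `f_j` by the same sign, so it preserves `ω` and
`ω(x, θx) = 0` term by term. The vectors whose first `i` coordinates in both halves vanish
are fixed by `θ` and form a subspace of codimension `2i`, so every subspace of dimension
`> 2i` contains a nonzero fixed vector `v`; if the subspace `U` is totally isotropic, then
`ω(v, θu) = ω(θv, θu) = ω(v, u) = 0` for all `u ∈ U`. The generators `b_l` of `V` are
pairwise orthogonal, while `ω(b_l, θ b_m)` vanishes unless `m` is the swapped index of `l`,
where it equals `±2`. Since `2 ≠ 0`, pairing against the `θ b_m` recovers every coefficient of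
a combination of the `b_l`, which gives both their linear independence and `V ∩ (θV)^⊥ = 0`.
-/

open Module Submodule

noncomputable section

/-- `K^{2n}`, written as pairs of `n`-tuples. -/
abbrev Vs (K : Type) (n : ℕ) : Type := (Fin n → K) × (Fin n → K)

/-- The standard symplectic form on `K^{2n}`: with `x = (x₁, x₂)`, `y = (y₁, y₂)`,
`ω(x,y) = ∑ⱼ (x₁ⱼ y₂ⱼ − x₂ⱼ y₁ⱼ)`; the basis vectors `e_j` and `f_j` below satisfy
`ω(e_j, f_k) = δ_{jk}` and `ω(e_j, e_k) = ω(f_j, f_k) = 0`. -/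
def sform {K : Type} [Field K] {n : ℕ} (x y : Vs K n) : K :=
  ∑ j, (x.1 j * y.2 j - x.2 j * y.1 j)

/-- The basis vector `e_j`. -/
def ee {K : Type} [Field K] {n : ℕ} (j : Fin n) : Vs K n := (Pi.single j 1, 0)

/-- The basis vector `f_j`. -/
def ff {K : Type} [Field K] {n : ℕ} (j : Fin n) : Vs K n := (0, Pi.single j 1)

/-- `U` is a totally isotropic subspace of `K^{2n}`. -/
def TotIso {K : Type} [Field K] {n : ℕ} (U : Submodule K (Vs K n)) : Prop :=
  ∀ x ∈ U, ∀ y ∈ U, sform x y = 0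

/-- The collineation induced by `g` maps the totally isotropic subspace `U` to an
opposite one, i.e. `U ∩ (gU)^⊥ = 0`. -/
def MapsToOpp {K : Type} [Field K] {n : ℕ} (g : Vs K n → Vs K n)
    (U : Submodule K (Vs K n)) : Prop :=
  ∀ v ∈ U, (∀ u ∈ U, sform v (g u) = 0) → v = 0

/-- The `(I_{2n−2i}, −I_{2i})`-homology: `−1` on `e₁, …, e_i, f₁, …, f_i` (0-indexed:
the first `i` coordinates of each half) and `+1` on the remaining basis vectors. -/
def homology (K : Type) [Field K] (n i : ℕ) : Vs K n → Vs K n :=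
  fun x => (fun j => if (j : ℕ) < i then - x.1 j else x.1 j,
            fun j => if (j : ℕ) < i then - x.2 j else x.2 j)

/-- The index `n − j + 1` (1-indexed), i.e. `n − 1 − j` in 0-indexed notation. -/
def partner {n : ℕ} (j : Fin n) : Fin n :=
  ⟨n - 1 - (j : ℕ), by have := j.isLt; omega⟩

/-- The generating set `{e_j + f_{n−j+1}, e_{n−j+1} + f_j : 1 ≤ j ≤ i}`. -/
def genSet (K : Type) [Field K] (n i : ℕ) : Set (Vs K n) :=
  {v | ∃ j : Fin n, (j : ℕ) < i ∧
        (v = ee j + ff (partner j) ∨ v = ee (partner j) + ff j)}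

section Form

variable {K : Type} [Field K] {n : ℕ}

lemma sform_add_left (x x' y : Vs K n) : sform (x + x') y = sform x y + sform x' y := by
  simp only [sform, Prod.fst_add, Prod.snd_add, Pi.add_apply, ← Finset.sum_add_distrib]
  exact Finset.sum_congr rfl fun _ _ => by ring

lemma sform_smul_left (c : K) (x y : Vs K n) : sform (c • x) y = c • sform x y := by
  simp only [sform, Prod.smul_fst, Prod.smul_snd, Pi.smul_apply, smul_eq_mul, Finset.mul_sum]
  exact Finset.sum_congr rfl fun _ _ => by ring

lemma sform_add_right (x y y' : Vs K n) : sform x (y + y') = sform x y + sform x y' := by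
  simp only [sform, Prod.fst_add, Prod.snd_add, Pi.add_apply, ← Finset.sum_add_distrib]
  exact Finset.sum_congr rfl fun _ _ => by ring

lemma sform_smul_right (c : K) (x y : Vs K n) : sform x (c • y) = c • sform x y := by
  simp only [sform, Prod.smul_fst, Prod.smul_snd, Pi.smul_apply, smul_eq_mul, Finset.mul_sum]
  exact Finset.sum_congr rfl fun _ _ => by ring

variable (K n) in
def sformₗ : Vs K n →ₗ[K] Vs K n →ₗ[K] K :=
  LinearMap.mk₂ K sform sform_add_left sform_smul_left sform_add_right sform_smul_right

@[simp] lemma sformₗ_apply (x y : Vs K n) : sformₗ K n x y = sform x y := rfl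

lemma sform_neg_right (x y : Vs K n) : sform x (-y) = -sform x y :=
  map_neg (sformₗ K n x) y

lemma sform_sum_smul_left {ι : Type*} (s : Finset ι) (c : ι → K) (b : ι → Vs K n) (y : Vs K n) :
    sform (∑ l ∈ s, c l • b l) y = ∑ l ∈ s, c l * sform (b l) y := by
  simp [← sformₗ_apply, map_sum]

@[simp] lemma sform_ee_ee (a b : Fin n) : sform (ee a : Vs K n) (ee b) = 0 := by
  simp [sform, ee]

@[simp] lemma sform_ee_ff (a b : Fin n) :
    sform (ee a : Vs K n) (ff b) = if a = b then 1 else 0 := by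
  simp [sform, ee, ff, Pi.single_apply, eq_comm]

@[simp] lemma sform_ff_ee (a b : Fin n) :
    sform (ff a : Vs K n) (ee b) = -if a = b then 1 else 0 := by
  simp [sform, ee, ff, Pi.single_apply, eq_comm]

@[simp] lemma sform_ff_ff (a b : Fin n) : sform (ff a : Vs K n) (ff b) = 0 := by
  simp [sform, ff]

lemma totIso_span {S : Set (Vs K n)} (hS : ∀ x ∈ S, ∀ y ∈ S, sform x y = 0) :
    TotIso (span K S) := by
  have hleft : ∀ x ∈ S, ∀ y ∈ span K S, sform x y = 0 := fun x hx =>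
    LinearMap.eqOn_span' (f := sformₗ K n x) (g := 0) (hS x hx)
  intro x hx y hy
  exact LinearMap.eqOn_span' (f := (sformₗ K n).flip y) (g := 0) (fun x hx => hleft x hx y hy) hx

end Form

section Homology

variable {K : Type} [Field K] {n i : ℕ}

lemma sform_homology_homology (x y : Vs K n) :
    sform (homology K n i x) (homology K n i y) = sform x y := by
  refine Finset.sum_congr rfl fun j _ => ?_
  simp only [homology]
  split_ifs <;> ring

lemma sform_self_homology (x : Vs K n) : sform x (homology K n i x) = 0 := by
  refine Finset.sum_eq_zero fun j _ => ?_
  simp only [homology]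
  split_ifs <;> ring

lemma homology_add (x y : Vs K n) :
    homology K n i (x + y) = homology K n i x + homology K n i y := by
  ext j <;> simp only [homology, Prod.fst_add, Prod.snd_add, Pi.add_apply] <;> split_ifs <;> ring

@[simp] lemma homology_ee (a : Fin n) :
    homology K n i (ee a) = if (a : ℕ) < i then -ee a else ee a := by
  by_cases ha : (a : ℕ) < i <;> simp only [ha, if_true, if_false] <;> ext j <;>
    by_cases hj : j = a <;> simp [homology, ee, ha, hj]

@[simp] lemma homology_ff (a : Fin n) :
    homology K n i (ff a) = if (a : ℕ) < i then -ff a else ff a := by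
  by_cases ha : (a : ℕ) < i <;> simp only [ha, if_true, if_false] <;> ext j <;>
    by_cases hj : j = a <;> simp [homology, ff, ha, hj]

end Homology

section Dual

variable {K : Type} [Field K] {n : ℕ} {ι : Type*} [Fintype ι]

lemma coeff_eq_zero_of_sform_sum_eq_zero {b : ι → Vs K n} {c : ι → K} {l : ι} {u : Vs K n}
    (hl : sform (b l) u ≠ 0) (hne : ∀ l' ≠ l, sform (b l') u = 0)
    (hc : sform (∑ l', c l' • b l') u = 0) : c l = 0 := by
  rw [sform_sum_smul_left, Finset.sum_eq_single l (fun l' _ h => by rw [hne l' h, mul_zero])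
    (by simp)] at hc
  exact (mul_eq_zero.mp hc).resolve_right hl

lemma linearIndependent_of_sform_dual {b : ι → Vs K n}
    (hb : ∀ l, ∃ u, sform (b l) u ≠ 0 ∧ ∀ l' ≠ l, sform (b l') u = 0) :
    LinearIndependent K b := by
  refine Fintype.linearIndependent_iff.mpr fun c hc l => ?_
  obtain ⟨u, hl, hne⟩ := hb l
  exact coeff_eq_zero_of_sform_sum_eq_zero hl hne (by simp [hc, sform])

lemma mapsToOpp_span_range {b : ι → Vs K n} {g : Vs K n → Vs K n}
    (hb : ∀ l, ∃ m, sform (b l) (g (b m)) ≠ 0 ∧ ∀ l' ≠ l, sform (b l') (g (b m)) = 0) :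
    MapsToOpp g (span K (Set.range b)) := by
  intro v hv hopp
  obtain ⟨c, rfl⟩ := (mem_span_range_iff_exists_fun K).mp hv
  have hc : c = 0 := funext fun l => by
    obtain ⟨m, hl, hne⟩ := hb l
    exact coeff_eq_zero_of_sform_sum_eq_zero hl hne (hopp _ (subset_span ⟨m, rfl⟩))
  simp [hc]

end Dual

section FixedVector

variable {K : Type} [Field K] {n i : ℕ}

lemma not_mapsToOpp_of_fixed {g : Vs K n → Vs K n}
    (hg : ∀ x y, sform (g x) (g y) = sform x y) {U : Submodule K (Vs K n)} (hU : TotIso U)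
    {v : Vs K n} (hv : v ∈ U) (hv0 : v ≠ 0) (hfix : g v = v) : ¬ MapsToOpp g U :=
  fun hopp => hv0 (hopp v hv fun u hu => by rw [← hfix, hg]; exact hU v hv u hu)

variable (K) in
def headProj (h : i ≤ n) : Vs K n →ₗ[K] Vs K i :=
  (LinearMap.funLeft K K (Fin.castLE h)).prodMap (LinearMap.funLeft K K (Fin.castLE h))

lemma homology_eq_self_of_headProj_eq_zero (h : i ≤ n) {v : Vs K n}
    (hv : headProj K h v = 0) : homology K n i v = v := by
  have hv1 := congr_arg Prod.fst hv
  have hv2 := congr_arg Prod.snd hv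
  ext j <;> simp only [homology] <;> split_ifs with hj
  · rw [show v.1 j = 0 from congr_fun hv1 ⟨j, hj⟩, neg_zero]
  · rfl
  · rw [show v.2 j = 0 from congr_fun hv2 ⟨j, hj⟩, neg_zero]
  · rfl

lemma exists_ne_zero_homology_eq_self (h : i ≤ n) {U : Submodule K (Vs K n)}
    (hU : 2 * i < finrank K U) : ∃ v ∈ U, v ≠ 0 ∧ homology K n i v = v := by
  have hker : LinearMap.ker (headProj K h ∘ₗ U.subtype) ≠ ⊥ :=
    LinearMap.ker_ne_bot_of_finrank_lt (by simpa [two_mul] using hU)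
  obtain ⟨v, hv, hv0⟩ := (Submodule.ne_bot_iff _).mp hker
  exact ⟨v, v.2, by simpa using hv0, homology_eq_self_of_headProj_eq_zero h hv⟩

end FixedVector

section GenFamily

variable {n i : ℕ}

@[simp] lemma partner_inj {a b : Fin n} : partner a = partner b ↔ a = b := by
  simp only [partner, Fin.ext_iff]
  omega

lemma le_partner_castLE (h : 2 * i ≤ n) (j : Fin i) :
    i ≤ (partner (Fin.castLE (by omega) j : Fin n) : ℕ) := by
  simp only [partner, Fin.val_castLE]
  omega

@[simp] lemma castLE_ne_partner_castLE (h : 2 * i ≤ n) (j k : Fin i) :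
    (Fin.castLE (by omega) j : Fin n) ≠ partner (Fin.castLE (by omega) k) := fun hjk => by
  have := le_partner_castLE h k
  rw [← hjk, Fin.val_castLE] at this
  omega

@[simp] lemma partner_castLE_ne_castLE (h : 2 * i ≤ n) (j k : Fin i) :
    partner (Fin.castLE (by omega) k : Fin n) ≠ Fin.castLE (by omega) j :=
  (castLE_ne_partner_castLE h j k).symm

variable (K : Type) [Field K] in
def genFamily (h : 2 * i ≤ n) : Fin i ⊕ Fin i → Vs K n :=
  Sum.elim (fun j => ee (Fin.castLE (by omega) j) + ff (partner (Fin.castLE (by omega) j)))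
    (fun j => ee (partner (Fin.castLE (by omega) j)) + ff (Fin.castLE (by omega) j))

lemma range_genFamily (K : Type) [Field K] (h : 2 * i ≤ n) :
    Set.range (genFamily K h) = genSet K n i := by
  ext v
  constructor
  · rintro ⟨j | j, rfl⟩
    · exact ⟨Fin.castLE (by omega) j, j.isLt, Or.inl rfl⟩
    · exact ⟨Fin.castLE (by omega) j, j.isLt, Or.inr rfl⟩
  · rintro ⟨j, hj, rfl | rfl⟩
    · exact ⟨Sum.inl ⟨j, hj⟩, rfl⟩
    · exact ⟨Sum.inr ⟨j, hj⟩, rfl⟩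

variable {K : Type} [Field K]

lemma sform_genFamily (h : 2 * i ≤ n) (l m : Fin i ⊕ Fin i) :
    sform (genFamily K h l) (genFamily K h m) = 0 := by
  rcases l with j | j <;> rcases m with k | k <;>
    simp [genFamily, sform_add_left, sform_add_right, h]

lemma sform_genFamily_homology (h : 2 * i ≤ n) (l m : Fin i ⊕ Fin i) :
    sform (genFamily K h l) (homology K n i (genFamily K h m)) =
      if l = m.swap then Sum.elim (fun _ => -2) (fun _ => 2) l else 0 := by
  rcases l with j | j <;> rcases m with k | k <;>
    simp [genFamily, homology_add, sform_add_left, sform_add_right, sform_neg_right, h,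
      fun k => not_lt.mpr (le_partner_castLE h k)] <;>
    split_ifs <;> norm_num

lemma genFamily_dual (hchar : (2 : K) ≠ 0) (h : 2 * i ≤ n) (l : Fin i ⊕ Fin i) :
    ∃ m, sform (genFamily K h l) (homology K n i (genFamily K h m)) ≠ 0 ∧
      ∀ l' ≠ l, sform (genFamily K h l') (homology K n i (genFamily K h m)) = 0 :=
  ⟨l.swap, by rcases l <;> simp [sform_genFamily_homology, hchar],
    fun l' hl' => by simp [sform_genFamily_homology, hl']⟩

end GenFamily

theorem homology_has_diagram_Cni2_general
    {K : Type} [Field K] {n i : ℕ}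
    (hchar : (2 : K) ≠ 0) (hi2 : 2 * i ≤ n) :
    -- θ preserves ω
    (∀ x y : Vs K n, sform (homology K n i x) (homology K n i y) = sform x y) ∧
    -- (a) θ is point-domestic
    (∀ x : Vs K n, sform x (homology K n i x) = 0) ∧
    -- (b) every totally isotropic subspace of dimension > 2i contains a nonzero fixed
    -- vector, hence is not mapped to an opposite
    (∀ U : Submodule K (Vs K n), TotIso U → 2 * i < finrank K U →
      (∃ v ∈ U, v ≠ 0 ∧ homology K n i v = v) ∧ ¬ MapsToOpp (homology K n i) U) ∧
    -- (c) the subspace V is totally isotropic of dimension 2i and is mapped to an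
    -- opposite
    (TotIso (span K (genSet K n i)) ∧
      finrank K ↥(span K (genSet K n i)) = 2 * i ∧
      MapsToOpp (homology K n i) (span K (genSet K n i))) := by
  refine ⟨sform_homology_homology, sform_self_homology, fun U hU hdim => ?_, ?_⟩
  · obtain ⟨v, hv, hv0, hfix⟩ := exists_ne_zero_homology_eq_self (by omega) hdim
    exact ⟨⟨v, hv, hv0, hfix⟩, not_mapsToOpp_of_fixed sform_homology_homology hU hv hv0 hfix⟩
  rw [← range_genFamily K hi2]
  have hli : LinearIndependent K (genFamily K hi2) := linearIndependent_of_sform_dual fun l =>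
    let ⟨_, hm⟩ := genFamily_dual hchar hi2 l; ⟨_, hm⟩
  refine ⟨totIso_span ?_, ?_, mapsToOpp_span_range (genFamily_dual hchar hi2)⟩
  · exact Set.forall_mem_range.2 fun l => Set.forall_mem_range.2 (sform_genFamily hi2 l)
  · simp [finrank_span_eq_card hli, two_mul]

theorem homology_has_diagram_Cni2
    {K : Type} [Field K] {n i : ℕ}
    (hchar : (2 : K) ≠ 0) (hn : 2 ≤ n) (hi1 : 1 ≤ i) (hi2 : 2 * i ≤ n) :
    -- θ preserves ω
    (∀ x y : Vs K n, sform (homology K n i x) (homology K n i y) = sform x y) ∧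
    -- (a) θ is point-domestic
    (∀ x : Vs K n, sform x (homology K n i x) = 0) ∧
    -- (b) every totally isotropic subspace of dimension > 2i contains a nonzero fixed
    -- vector, hence is not mapped to an opposite
    (∀ U : Submodule K (Vs K n), TotIso U → 2 * i < finrank K U →
      (∃ v ∈ U, v ≠ 0 ∧ homology K n i v = v) ∧ ¬ MapsToOpp (homology K n i) U) ∧
    -- (c) the subspace V is totally isotropic of dimension 2i and is mapped to an
    -- opposite
    (TotIso (span K (genSet K n i)) ∧
      finrank K ↥(span K (genSet K n i)) = 2 * i ∧
      MapsToOpp (homology K n i) (span K (genSet K n i))) :=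
  homology_has_diagram_Cni2_general hchar hi2
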